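/- Let r > 0 be real and let Γ ⊆ GL₃(ℂ) be the subgroup generated by h_X and h_Y. An element g ∈ Γ has lower-right 2×2 block equal to the identity 𝟏 if and only if g is the block matrix [[1, 0], [2·(a₀·𝟏 + a₁·𝐢 + a₂·𝐣 + a₃·𝐤)·v, 𝟏]] for some integers a₀, a₁, a₂, a₃ with a₀ + a₁ + a₂ + a₃ even; moreover every such block matrix belongs to Γ. -/

import Mathlib

open Matrix Complex

/-- The holonomy matrix `h_X`. -/
noncomputable def hX (r : ℝ) : Matrix (Fin 3) (Fin 3) ℂ :=
  !![1, 0, 0; (r : ℂ), 0, 1; (r : ℂ), -1, 0]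

/-- The holonomy matrix `h_Y`. -/
noncomputable def hY (r : ℝ) : Matrix (Fin 3) (Fin 3) ℂ :=
  !![1, 0, 0; -Complex.I * (r : ℂ), 0, -Complex.I; (r : ℂ), -Complex.I, 0]

/-- The quaternionic `2×2` matrices `𝟏, 𝐢, 𝐣, 𝐤`. -/
noncomputable def q1 : Matrix (Fin 2) (Fin 2) ℂ := !![1, 0; 0, 1]
noncomputable def qi : Matrix (Fin 2) (Fin 2) ℂ := !![0, 1; -1, 0]
noncomputable def qj : Matrix (Fin 2) (Fin 2) ℂ := !![0, -Complex.I; -Complex.I, 0]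
noncomputable def qk : Matrix (Fin 2) (Fin 2) ℂ := !![-Complex.I, 0; 0, Complex.I]

/-- The vector `v = (0, r) ∈ ℂ²`. -/
noncomputable def vvec (r : ℝ) : Fin 2 → ℂ := ![0, (r : ℂ)]

/-- The subgroup `Γ` of `GL₃(ℂ)` generated by `h_X` and `h_Y`. -/
noncomputable def Γgp (r : ℝ) : Subgroup (GL (Fin 3) ℂ) :=
  Subgroup.closure
    {g : GL (Fin 3) ℂ |
      (g : Matrix (Fin 3) (Fin 3) ℂ) = hX r ∨ (g : Matrix (Fin 3) (Fin 3) ℂ) = hY r}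

/-- The block matrix `[[1, 0], [2(a₀𝟏 + a₁𝐢 + a₂𝐣 + a₃𝐤)v, 𝟏]]`. -/
noncomputable def latticeMat (r : ℝ) (a₀ a₁ a₂ a₃ : ℤ) :
    Matrix (Fin 3) (Fin 3) ℂ :=
  !![1, 0, 0;
     ((2:ℂ) • ((a₀ • q1 + a₁ • qi + a₂ • qj + a₃ • qk) *ᵥ vvec r)) 0, 1, 0;
     ((2:ℂ) • ((a₀ • q1 + a₁ • qi + a₂ • qj + a₃ • qk) *ᵥ vvec r)) 1, 0, 1]

/-!
Let the Lipschitz quaternions `ℍ[ℤ]` act on `ℂ²` by `i ↦ 𝐢`, `j ↦ 𝐣`, `k ↦ 𝐤`. Then `h_X` and `h_Y`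
are the matrices `quatAffine r q a` of the affine maps `x ↦ q x + (2a + q - 1) v` for
`(q, a) = (i, 1)` and `(j, 1)`, and these matrices multiply like the semidirect product
`(q, a) (q', a') = (q q', a + q a')`. Hence every element of `Γ` is such a matrix with `q` in the
unit group `{±1, ±i, ±j, ±k}`, and the parity of the coordinate sum of `a` equals the parity of
the `i`- and `j`-coordinates of `q`: both are additive along the group law, the first because
units have odd coordinate sum. The lower-right block is `𝟏` exactly when `q = 1`, and then `a`
has even coordinate sum.

Conversely, the `a` with `quatAffine r 1 a ∈ Γ` form an additive group which is stable under left
multiplication by `i` and `j` (conjugation by `h_X` and `h_Y`) and contains `i - j` (from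
`h_X² h_Y²`) and `j + k` (from `h_X h_Y h_X h_Y h_X²`); these generate the even-sum lattice.
-/

section AffineMatrix

variable {R : Type*} [Semiring R]

def affineMatrix (u : Fin 2 → R) (A : Matrix (Fin 2) (Fin 2) R) : Matrix (Fin 3) (Fin 3) R :=
  !![1, 0, 0; u 0, A 0 0, A 0 1; u 1, A 1 0, A 1 1]

theorem affineMatrix_mul (u u' : Fin 2 → R) (A A' : Matrix (Fin 2) (Fin 2) R) :
    affineMatrix u A * affineMatrix u' A' = affineMatrix (u + A *ᵥ u') (A * A') := by
  ext i j
  fin_cases i <;> fin_cases j <;> simp [affineMatrix, Matrix.mul_apply, Fin.sum_univ_succ]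

theorem affineMatrix_zero_one : affineMatrix (0 : Fin 2 → R) 1 = 1 := by
  ext i j
  fin_cases i <;> fin_cases j <;> simp [affineMatrix]

@[simp]
theorem affineMatrix_succ_succ (u : Fin 2 → R) (A : Matrix (Fin 2) (Fin 2) R) (i j : Fin 2) :
    affineMatrix u A i.succ j.succ = A i j := by
  fin_cases i <;> fin_cases j <;> rfl

end AffineMatrix

namespace GammaKernel

open Quaternion

def quat (a₀ a₁ a₂ a₃ : ℤ) : ℍ[ℤ] := ⟨a₀, a₁, a₂, a₃⟩

@[simp] theorem re_quat (a₀ a₁ a₂ a₃ : ℤ) : (quat a₀ a₁ a₂ a₃).re = a₀ := rfl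
@[simp] theorem imI_quat (a₀ a₁ a₂ a₃ : ℤ) : (quat a₀ a₁ a₂ a₃).imI = a₁ := rfl
@[simp] theorem imJ_quat (a₀ a₁ a₂ a₃ : ℤ) : (quat a₀ a₁ a₂ a₃).imJ = a₂ := rfl
@[simp] theorem imK_quat (a₀ a₁ a₂ a₃ : ℤ) : (quat a₀ a₁ a₂ a₃).imK = a₃ := rfl

def unitI : ℍ[ℤ] := quat 0 1 0 0
def unitJ : ℍ[ℤ] := quat 0 0 1 0
def unitK : ℍ[ℤ] := quat 0 0 0 1

noncomputable def quatBasis :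
    QuaternionAlgebra.Basis (Matrix (Fin 2) (Fin 2) ℂ) (-1 : ℤ) 0 (-1) where
  i := qi
  i_mul_i := by ext i j; fin_cases i <;> fin_cases j <;> simp [qi]
  j := qj
  j_mul_j := by ext i j; fin_cases i <;> fin_cases j <;> simp [qj]
  k := qk
  i_mul_j := by ext i j; fin_cases i <;> fin_cases j <;> simp [qi, qj, qk]
  j_mul_i := by ext i j; fin_cases i <;> fin_cases j <;> simp [qi, qj, qk]

noncomputable def quatRep : ℍ[ℤ] →ₐ[ℤ] Matrix (Fin 2) (Fin 2) ℂ := quatBasis.liftHom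

theorem quatRep_eq (q : ℍ[ℤ]) :
    quatRep q = !![q.re - q.imK * I, q.imI - q.imJ * I; -q.imI - q.imJ * I, q.re + q.imK * I] := by
  have h_lift : quatRep q = algebraMap ℤ _ q.re + q.imI • qi + q.imJ • qj + q.imK • qk := rfl
  ext i j
  fin_cases i <;> fin_cases j <;> simp [h_lift, Matrix.intCast_apply, qi, qj, qk] <;> ring

theorem quatRep_injective : Function.Injective quatRep := by
  intro p q h
  have h₀₀ := congrFun₂ h 0 0
  have h₀₁ := congrFun₂ h 0 1
  simp [quatRep_eq, Complex.ext_iff] at h₀₀ h₀₁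
  ext <;> simp_all

noncomputable def quatAffine (r : ℝ) (q a : ℍ[ℤ]) : Matrix (Fin 3) (Fin 3) ℂ :=
  affineMatrix (quatRep (2 * a + q - 1) *ᵥ vvec r) (quatRep q)

theorem quatAffine_mul (r : ℝ) (q a q' a' : ℍ[ℤ]) :
    quatAffine r q a * quatAffine r q' a' = quatAffine r (q * q') (a + q * a') := by
  rw [quatAffine, quatAffine, quatAffine, affineMatrix_mul, Matrix.mulVec_mulVec, ← map_mul,
    ← Matrix.add_mulVec, ← map_add, map_mul]
  congr 3
  noncomm_ring

theorem quatAffine_one_zero (r : ℝ) : quatAffine r 1 0 = 1 := by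
  simp [quatAffine, affineMatrix_zero_one]

theorem quatAffine_unitI_one (r : ℝ) : quatAffine r unitI 1 = hX r := by
  rw [quatAffine, two_mul]
  ext i j
  fin_cases i <;> fin_cases j <;> simp [affineMatrix, hX, unitI, quatRep_eq, vvec, Matrix.mulVec]

theorem quatAffine_unitJ_one (r : ℝ) : quatAffine r unitJ 1 = hY r := by
  rw [quatAffine, two_mul]
  ext i j
  fin_cases i <;> fin_cases j <;> simp [affineMatrix, hY, unitJ, quatRep_eq, vvec, Matrix.mulVec]

theorem quatAffine_one_quat (r : ℝ) (a₀ a₁ a₂ a₃ : ℤ) :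
    quatAffine r 1 (quat a₀ a₁ a₂ a₃) = latticeMat r a₀ a₁ a₂ a₃ := by
  rw [quatAffine, two_mul]
  ext i j
  fin_cases i <;> fin_cases j <;>
    simp [affineMatrix, latticeMat, quatRep_eq, q1, qi, qj, qk, vvec, Matrix.mulVec] <;> ring

theorem eq_one_of_quatAffine_succ_succ {r : ℝ} {q a : ℍ[ℤ]}
    (h : ∀ i j : Fin 2, quatAffine r q a i.succ j.succ = (1 : Matrix (Fin 2) (Fin 2) ℂ) i j) :
    q = 1 :=
  quatRep_injective <| by
    ext i j
    simpa [quatAffine] using h i j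

theorem quatAffine_mul_quatAffine_star (r : ℝ) {q : ℍ[ℤ]} (hq : q * star q = 1) (a : ℍ[ℤ]) :
    quatAffine r q a * quatAffine r (star q) (-(star q * a)) = 1 := by
  rw [quatAffine_mul, hq, mul_neg, ← mul_assoc, hq, one_mul, add_neg_cancel, quatAffine_one_zero]

theorem isUnit_quatAffine (r : ℝ) {q : ℍ[ℤ]} (hq : q * star q = 1) (a : ℍ[ℤ]) :
    IsUnit (quatAffine r q a) :=
  have h := quatAffine_mul_quatAffine_star r hq a
  ⟨⟨_, _, h, mul_eq_one_comm.mp h⟩, rfl⟩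

theorem coe_inv_of_coe_eq_quatAffine {r : ℝ} {g : GL (Fin 3) ℂ} {q a : ℍ[ℤ]}
    (hq : q * star q = 1) (hg : (g : Matrix (Fin 3) (Fin 3) ℂ) = quatAffine r q a) :
    ((g⁻¹ : GL (Fin 3) ℂ) : Matrix (Fin 3) (Fin 3) ℂ) = quatAffine r (star q) (-(star q * a)) :=
  Units.inv_eq_of_mul_eq_one_right (hg ▸ quatAffine_mul_quatAffine_star r hq a)

instance : DecidableEq ℍ[ℤ] := fun _ _ => decidable_of_iff _ QuaternionAlgebra.ext_iff.symm

def lipschitzUnits : List ℍ[ℤ] := [1, -1, unitI, -unitI, unitJ, -unitJ, unitK, -unitK]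

theorem mul_mem_lipschitzUnits :
    ∀ q ∈ lipschitzUnits, ∀ q' ∈ lipschitzUnits, q * q' ∈ lipschitzUnits := by decide

theorem star_mem_lipschitzUnits : ∀ q ∈ lipschitzUnits, star q ∈ lipschitzUnits := by decide

theorem mul_star_eq_one_of_mem_lipschitzUnits : ∀ q ∈ lipschitzUnits, q * star q = 1 := by decide

def parity : ℍ[ℤ] →+* ZMod 2 where
  toFun a := a.re + a.imI + a.imJ + a.imK
  map_one' := by simp
  map_mul' a b := by
    simp only [Quaternion.re_mul, Quaternion.imI_mul, Quaternion.imJ_mul, Quaternion.imK_mul]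
    push_cast
    simp only [sub_eq_add_neg, CharTwo.neg_eq]
    ring
  map_zero' := by simp
  map_add' a b := by simp; ring

theorem parity_eq_zero_iff (a : ℍ[ℤ]) :
    parity a = 0 ↔ Even (a.re + a.imI + a.imJ + a.imK) := by
  rw [← ZMod.intCast_eq_zero_iff_even]
  simp [parity]

theorem parity_eq_one_of_mem_lipschitzUnits : ∀ q ∈ lipschitzUnits, parity q = 1 := by decide

def ijParity (q : ℍ[ℤ]) : ZMod 2 := q.imI + q.imJ

theorem ijParity_star_of_mem_lipschitzUnits :
    ∀ q ∈ lipschitzUnits, ijParity (star q) = ijParity q := by decide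

theorem ijParity_mul_of_mem_lipschitzUnits : ∀ q ∈ lipschitzUnits, ∀ q' ∈ lipschitzUnits,
    ijParity (q * q') = ijParity q + ijParity q' := by decide

theorem exists_quatAffine_of_mem {r : ℝ} {g : GL (Fin 3) ℂ} (hg : g ∈ Γgp r) :
    ∃ q ∈ lipschitzUnits, ∃ a, ijParity q = parity a ∧
      (g : Matrix (Fin 3) (Fin 3) ℂ) = quatAffine r q a := by
  induction hg using Subgroup.closure_induction with
  | mem g hg =>
    rcases hg with hg | hg
    · exact ⟨unitI, by decide, 1, by decide, hg.trans (quatAffine_unitI_one r).symm⟩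
    · exact ⟨unitJ, by decide, 1, by decide, hg.trans (quatAffine_unitJ_one r).symm⟩
  | one => exact ⟨1, by decide, 0, by decide, (quatAffine_one_zero r).symm⟩
  | mul g g' _ _ ih ih' =>
    obtain ⟨q, hq, a, hqa, hg⟩ := ih
    obtain ⟨q', hq', a', hqa', hg'⟩ := ih'
    refine ⟨q * q', mul_mem_lipschitzUnits q hq q' hq', a + q * a', ?_, ?_⟩
    · rw [ijParity_mul_of_mem_lipschitzUnits q hq q' hq', map_add, map_mul,
        parity_eq_one_of_mem_lipschitzUnits q hq, one_mul, hqa, hqa']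
    · rw [Units.val_mul, hg, hg', quatAffine_mul]
  | inv g _ ih =>
    obtain ⟨q, hq, a, hqa, hg⟩ := ih
    have hq_star := star_mem_lipschitzUnits q hq
    refine ⟨star q, hq_star, -(star q * a), ?_,
      coe_inv_of_coe_eq_quatAffine (mul_star_eq_one_of_mem_lipschitzUnits q hq) hg⟩
    rw [ijParity_star_of_mem_lipschitzUnits q hq, map_neg, map_mul,
      parity_eq_one_of_mem_lipschitzUnits _ hq_star, one_mul, hqa, ZModModule.neg_eq_self]

noncomputable def Γmat (r : ℝ) : Submonoid (Matrix (Fin 3) (Fin 3) ℂ) :=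
  (Γgp r).toSubmonoid.map (Units.coeHom _)

theorem quatAffine_unitI_one_mem (r : ℝ) : quatAffine r unitI 1 ∈ Γmat r :=
  ⟨(isUnit_quatAffine r (by decide) 1).unit,
    Subgroup.subset_closure (Or.inl (quatAffine_unitI_one r)), rfl⟩

theorem quatAffine_unitJ_one_mem (r : ℝ) : quatAffine r unitJ 1 ∈ Γmat r :=
  ⟨(isUnit_quatAffine r (by decide) 1).unit,
    Subgroup.subset_closure (Or.inr (quatAffine_unitJ_one r)), rfl⟩

theorem quatAffine_star_mem {r : ℝ} {q a : ℍ[ℤ]} (hq : q * star q = 1)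
    (h : quatAffine r q a ∈ Γmat r) : quatAffine r (star q) (-(star q * a)) ∈ Γmat r := by
  obtain ⟨g, hg, hga⟩ := h
  exact ⟨g⁻¹, (Γgp r).inv_mem hg, coe_inv_of_coe_eq_quatAffine hq hga⟩

def translations (r : ℝ) : AddSubgroup ℍ[ℤ] where
  carrier := {a | quatAffine r 1 a ∈ Γmat r}
  zero_mem' := by
    change quatAffine r 1 0 ∈ Γmat r
    exact (quatAffine_one_zero r).symm ▸ (Γmat r).one_mem
  add_mem' {a b} ha hb := by
    change quatAffine r 1 (a + b) ∈ Γmat r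
    simpa only [quatAffine_mul, one_mul] using (Γmat r).mul_mem ha hb
  neg_mem' {a} ha := by simpa using quatAffine_star_mem (by simp) ha

theorem mem_translations {r : ℝ} {a : ℍ[ℤ]} : a ∈ translations r ↔ quatAffine r 1 a ∈ Γmat r :=
  Iff.rfl

theorem mul_mem_translations {r : ℝ} {u c a : ℍ[ℤ]} (hu : u * star u = 1)
    (hγ : quatAffine r u c ∈ Γmat r) (ha : a ∈ translations r) : u * a ∈ translations r := by
  have h := (Γmat r).mul_mem ((Γmat r).mul_mem hγ ha) (quatAffine_star_mem hu hγ)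
  have h_shift : c + u * a + u * -(star u * c) = u * a := by
    rw [mul_neg, ← mul_assoc, hu, one_mul]
    abel
  rwa [quatAffine_mul, quatAffine_mul, mul_one, hu, h_shift] at h

theorem unitI_mul_mem_translations {r : ℝ} {a : ℍ[ℤ]} (ha : a ∈ translations r) :
    unitI * a ∈ translations r :=
  mul_mem_translations (by decide) (quatAffine_unitI_one_mem r) ha

theorem unitJ_mul_mem_translations {r : ℝ} {a : ℍ[ℤ]} (ha : a ∈ translations r) :
    unitJ * a ∈ translations r :=
  mul_mem_translations (by decide) (quatAffine_unitJ_one_mem r) ha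

theorem unitK_mul_mem_translations {r : ℝ} {a : ℍ[ℤ]} (ha : a ∈ translations r) :
    unitK * a ∈ translations r := by
  simpa only [← mul_assoc, show unitI * unitJ = unitK by decide] using
    unitI_mul_mem_translations (unitJ_mul_mem_translations ha)

theorem unitI_sub_unitJ_mem_translations (r : ℝ) : unitI - unitJ ∈ translations r := by
  have hI := quatAffine_unitI_one_mem r
  have hJ := quatAffine_unitJ_one_mem r
  have h := (Γmat r).mul_mem ((Γmat r).mul_mem ((Γmat r).mul_mem hI hI) hJ) hJ
  simp only [quatAffine_mul] at h
  rw [mem_translations]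
  convert h using 2 <;> decide

theorem unitJ_add_unitK_mem_translations (r : ℝ) : unitJ + unitK ∈ translations r := by
  have hI := quatAffine_unitI_one_mem r
  have hJ := quatAffine_unitJ_one_mem r
  have h := (Γmat r).mul_mem ((Γmat r).mul_mem ((Γmat r).mul_mem ((Γmat r).mul_mem
    ((Γmat r).mul_mem hI hJ) hI) hJ) hI) hI
  simp only [quatAffine_mul] at h
  rw [mem_translations]
  convert h using 2 <;> decide

theorem quat_mem_translations (r : ℝ) {a₀ a₁ a₂ a₃ : ℤ} (h : Even (a₀ + a₁ + a₂ + a₃)) :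
    quat a₀ a₁ a₂ a₃ ∈ translations r := by
  obtain ⟨m, hm⟩ := h
  have h_ij := unitI_sub_unitJ_mem_translations r
  have h_one_sub_k : 1 - unitK ∈ translations r := by
    simpa only [show unitJ * (unitI - unitJ) = 1 - unitK by decide] using
      unitJ_mul_mem_translations h_ij
  have h_one_add_k : 1 + unitK ∈ translations r := by
    simpa only [show -(unitI * (unitI - unitJ)) = 1 + unitK by decide] using
      neg_mem (unitI_mul_mem_translations h_ij)
  have h_i_add_j : unitI + unitJ ∈ translations r := by
    simpa only [show unitK * (unitI - unitJ) = unitI + unitJ by decide] using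
      unitK_mul_mem_translations h_ij
  have h_two_k : unitK + unitK ∈ translations r := by
    simpa only [show unitK * ((1 - unitK) + (1 + unitK)) = unitK + unitK by decide] using
      unitK_mul_mem_translations (add_mem h_one_sub_k h_one_add_k)
  have h_decomp : quat a₀ a₁ a₂ a₃ = a₀ • (1 - unitK) + a₁ • (unitI + unitJ) +
      (a₂ - a₁) • (unitJ + unitK) + (m - a₂) • (unitK + unitK) := by
    ext <;> simp [unitI, unitJ, unitK]
    omega
  rw [h_decomp]
  exact add_mem (add_mem (add_mem (zsmul_mem h_one_sub_k a₀) (zsmul_mem h_i_add_j a₁))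
    (zsmul_mem (unitJ_add_unitK_mem_translations r) _)) (zsmul_mem h_two_k _)

end GammaKernel

open GammaKernel

theorem gamma_kernel_characterization_general (r : ℝ) :
    (∀ g ∈ Γgp r,
      ((∀ i j : Fin 2, (g : Matrix (Fin 3) (Fin 3) ℂ) i.succ j.succ
          = (1 : Matrix (Fin 2) (Fin 2) ℂ) i j)
        ↔ ∃ a₀ a₁ a₂ a₃ : ℤ, Even (a₀ + a₁ + a₂ + a₃) ∧
            (g : Matrix (Fin 3) (Fin 3) ℂ) = latticeMat r a₀ a₁ a₂ a₃))
    ∧ ∀ a₀ a₁ a₂ a₃ : ℤ, Even (a₀ + a₁ + a₂ + a₃) →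
        ∃ g ∈ Γgp r, (g : Matrix (Fin 3) (Fin 3) ℂ) = latticeMat r a₀ a₁ a₂ a₃ := by
  refine ⟨fun g hg => ⟨fun h_block => ?_, ?_⟩, fun a₀ a₁ a₂ a₃ h => ?_⟩
  · obtain ⟨q, -, a, h_parity, hg⟩ := exists_quatAffine_of_mem hg
    obtain rfl : q = 1 := eq_one_of_quatAffine_succ_succ (hg ▸ h_block)
    refine ⟨a.re, a.imI, a.imJ, a.imK, ?_, hg.trans (quatAffine_one_quat r _ _ _ _)⟩
    rw [← parity_eq_zero_iff, ← h_parity]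
    rfl
  · rintro ⟨a₀, a₁, a₂, a₃, -, hg⟩ i j
    rw [hg]
    fin_cases i <;> fin_cases j <;> simp [latticeMat]
  · rw [← quatAffine_one_quat]
    exact quat_mem_translations r h

/-- For `r > 0`: an element `g ∈ Γ` has lower-right `2×2` block equal to `𝟏`
if and only if `g = [[1,0],[2(a₀𝟏+a₁𝐢+a₂𝐣+a₃𝐤)v, 𝟏]]` for integers `aᵢ` with
even sum; moreover every such block matrix belongs to `Γ`. -/
theorem gamma_kernel_characterization (r : ℝ) (hr : 0 < r) :
    (∀ g ∈ Γgp r,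
      ((∀ i j : Fin 2, (g : Matrix (Fin 3) (Fin 3) ℂ) i.succ j.succ
          = (1 : Matrix (Fin 2) (Fin 2) ℂ) i j)
        ↔ ∃ a₀ a₁ a₂ a₃ : ℤ, Even (a₀ + a₁ + a₂ + a₃) ∧
            (g : Matrix (Fin 3) (Fin 3) ℂ) = latticeMat r a₀ a₁ a₂ a₃))
    ∧ ∀ a₀ a₁ a₂ a₃ : ℤ, Even (a₀ + a₁ + a₂ + a₃) →
        ∃ g ∈ Γgp r, (g : Matrix (Fin 3) (Fin 3) ℂ) = latticeMat r a₀ a₁ a₂ a₃ :=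
  gamma_kernel_characterization_general r
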